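/- Assume the subsonic condition γρ*^{γ−1} > m*²/ρ*². Then there exist constants ε* > 0, θ > 0 and C > 0 such that the matrix symbol K̂(ξ) = (ε*/α(ξ)^{1/2})·[[0, 1], [−1, 0]] satisfies: (i) K̂(ξ) is skew-symmetric for every ξ ∈ ℝ; (ii) for every ξ ∈ ℝ and every y ∈ ℝ², yᵀ·( (1/2)(K̂(ξ)Â(ξ) + (K̂(ξ)Â(ξ))ᵀ) + B* )·y ≥ θ·|y|²; (iii) the operator norms satisfy |K̂(ξ)| ≤ C and |ξ|·|K̂(ξ)| ≤ C for all ξ ∈ ℝ. That is, K̂ is a compensating matrix symbol for the triplet (I, Â(ξ), B*), with lower bound θ and upper bounds C uniform in ξ. -/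

import Mathlib

open Matrix

/-- `α(ξ) = p'(ρ*) − m*²/ρ*² + (k²/2)ξ²` with `p(ρ) = ρ^γ`. -/
noncomputable def alphaSym (ρs ms k γ ξ : ℝ) : ℝ :=
  γ * ρs ^ (γ - 1) - ms ^ 2 / ρs ^ 2 + k ^ 2 / 2 * ξ ^ 2

lemma norm_clm_smul_rot_le (s : ℝ) (hs : 0 ≤ s) :
    ‖Matrix.toEuclideanCLM (𝕜 := ℝ) (n := Fin 2) (s • !![0, 1; -1, 0])‖ ≤ s := by
  apply ContinuousLinearMap.opNorm_le_bound _ hs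
  intro x
  have h := Matrix.ofLp_toEuclideanCLM (𝕜 := ℝ) (n := Fin 2)
    (s • !![0, 1; -1, 0]) x
  have h0 := congrFun h 0
  have h1 := congrFun h 1
  simp [Matrix.mulVec, dotProduct, Fin.sum_univ_two] at h0 h1
  rw [EuclideanSpace.norm_eq, EuclideanSpace.norm_eq, Fin.sum_univ_two, Fin.sum_univ_two]
  have he : (s • !![0, 1; -1, 0] : Matrix (Fin 2) (Fin 2) ℝ) = !![0, s; -s, 0] := by
    ext i j; fin_cases i <;> fin_cases j <;> simp
  rw [he]
  simp [Matrix.mulVec, dotProduct, Fin.sum_univ_two]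
  rw [abs_of_nonneg hs, mul_pow, mul_pow, sq_abs, sq_abs, ← mul_add, Real.sqrt_mul (sq_nonneg s), Real.sqrt_sq hs, add_comm]


set_option maxHeartbeats 2000000

/-- The compensating matrix symbol `K̂(ξ) = (ε*/√α(ξ))·[[0,1],[−1,0]]` for the triplet
`(I, Â(ξ), B*)` of the linearized viscous QHD system about a subsonic state:
it is skew-symmetric, `[K̂(ξ)Â(ξ)]ˢ + B* ≥ θ·I` uniformly in `ξ`, and its Euclidean operator
norm satisfies `|K̂(ξ)| ≤ C` and `|ξ||K̂(ξ)| ≤ C` uniformly in `ξ`. -/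
theorem subsonic_compensating_symbol
    (ρs ms μ k γ : ℝ) (hρ : 0 < ρs) (hμ : 0 < μ) (hk : 0 < k) (hγ : 1 < γ)
    (hsub : ms ^ 2 / ρs ^ 2 < γ * ρs ^ (γ - 1)) :
    ∃ εs θ C : ℝ, 0 < εs ∧ 0 < θ ∧ 0 < C ∧
      ∀ ξ : ℝ,
        ((εs / Real.sqrt (alphaSym ρs ms k γ ξ)) •
            (!![0, 1; -1, 0] : Matrix (Fin 2) (Fin 2) ℝ))ᵀ
          = -((εs / Real.sqrt (alphaSym ρs ms k γ ξ)) • !![0, 1; -1, 0]) ∧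
        (∀ y : Fin 2 → ℝ,
          θ * (y 0 ^ 2 + y 1 ^ 2) ≤
            y ⬝ᵥ (((1 / 2 : ℝ) •
              (((εs / Real.sqrt (alphaSym ρs ms k γ ξ)) • !![0, 1; -1, 0]) *
                  !![0, Real.sqrt (alphaSym ρs ms k γ ξ);
                      Real.sqrt (alphaSym ρs ms k γ ξ), 2 * ms / ρs]
                + (((εs / Real.sqrt (alphaSym ρs ms k γ ξ)) • !![0, 1; -1, 0]) *
                    !![0, Real.sqrt (alphaSym ρs ms k γ ξ);
                        Real.sqrt (alphaSym ρs ms k γ ξ), 2 * ms / ρs])ᵀ)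
              + !![0, 0; 0, μ]).mulVec y)) ∧
        ‖Matrix.toEuclideanCLM (𝕜 := ℝ) (n := Fin 2)
            ((εs / Real.sqrt (alphaSym ρs ms k γ ξ)) • !![0, 1; -1, 0])‖ ≤ C ∧
        |ξ| * ‖Matrix.toEuclideanCLM (𝕜 := ℝ) (n := Fin 2)
            ((εs / Real.sqrt (alphaSym ρs ms k γ ξ)) • !![0, 1; -1, 0])‖ ≤ C := by
  set α0 : ℝ := γ * ρs ^ (γ - 1) - ms ^ 2 / ρs ^ 2 with hα0def
  have hα0 : 0 < α0 := sub_pos.2 hsub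
  have hαeq : ∀ ξ : ℝ, alphaSym ρs ms k γ ξ = α0 + k ^ 2 / 2 * ξ ^ 2 := by
    intro ξ; rw [alphaSym, hα0def]
  clear_value α0
  clear hα0def hsub
  set c2 : ℝ := ms ^ 2 / (ρs ^ 2 * α0) with hc2def
  have hc2 : 0 ≤ c2 := by positivity
  have hbkey : ms ^ 2 = c2 * (ρs ^ 2 * α0) := by
    rw [hc2def]; field_simp
  clear_value c2
  clear hc2def
  set εs : ℝ := min 1 (μ / (2 * (1 + 2 * c2))) with hεdef
  have hε : 0 < εs := lt_min one_pos (by positivity)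
  have hεmu : εs * (1 + 2 * c2) ≤ μ / 2 := by
    have h1 : εs ≤ μ / (2 * (1 + 2 * c2)) := min_le_right _ _
    rw [le_div_iff₀ (by positivity : (0:ℝ) < 2 * (1 + 2 * c2))] at h1
    nlinarith
  clear_value εs
  clear hεdef
  set θ : ℝ := min (εs / 2) (μ / 2) with hθdef
  have hθ : 0 < θ := lt_min (by positivity) (by positivity)
  have hθ1 : θ ≤ εs / 2 := min_le_left _ _
  have hθ2 : θ ≤ μ / 2 := min_le_right _ _
  clear_value θ
  clear hθdef
  have hsα0 : 0 < Real.sqrt α0 := Real.sqrt_pos.2 hα0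
  set C : ℝ := εs / Real.sqrt α0 + εs * Real.sqrt 2 / k + 1 with hCdef
  have hC : 0 < C := by positivity
  have hC1 : εs / Real.sqrt α0 ≤ C := by
    have h3 : (0:ℝ) ≤ εs * Real.sqrt 2 / k := by positivity
    rw [hCdef]; linarith
  have hC2 : εs * Real.sqrt 2 / k ≤ C := by
    have h4 : (0:ℝ) ≤ εs / Real.sqrt α0 := by positivity
    rw [hCdef]; linarith
  clear_value C
  clear hCdef
  refine ⟨εs, θ, C, hε, hθ, hC, fun ξ => ?_⟩
  have haα0 : α0 ≤ alphaSym ρs ms k γ ξ := by rw [hαeq]; nlinarith [sq_nonneg ξ]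
  have hak : k ^ 2 / 2 * ξ ^ 2 ≤ alphaSym ρs ms k γ ξ := by rw [hαeq]; nlinarith
  have ha : 0 < alphaSym ρs ms k γ ξ := lt_of_lt_of_le hα0 haα0
  set s : ℝ := Real.sqrt (alphaSym ρs ms k γ ξ) with hsdef
  have hs : 0 < s := Real.sqrt_pos.2 ha
  have hs2 : s ^ 2 = alphaSym ρs ms k γ ξ := Real.sq_sqrt ha.le
  have hsα : Real.sqrt α0 ≤ s := Real.sqrt_le_sqrt haα0
  have hsk : k ^ 2 / 2 * ξ ^ 2 ≤ s ^ 2 := hs2 ▸ hak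
  have hsa : α0 ≤ s ^ 2 := hs2 ▸ haα0
  clear_value s
  clear hsdef hs2 haα0 hak ha hαeq
  refine ⟨?_, ?_, ?_, ?_⟩
  · ext i j; fin_cases i <;> fin_cases j <;> simp
  · intro y
    set b : ℝ := εs * ms / (ρs * s) with hbdef
    have hb2 : b ^ 2 ≤ εs ^ 2 * c2 := by
      rw [hbdef, div_pow]
      rw [div_le_iff₀ (by positivity : (0:ℝ) < (ρs * s) ^ 2)]
      have h8 : εs ^ 2 * ms ^ 2 = εs ^ 2 * (c2 * (ρs ^ 2 * α0)) := by rw [← hbkey]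
      have h9 : 0 ≤ εs ^ 2 * c2 * ρs ^ 2 * (s ^ 2 - α0) :=
        mul_nonneg (mul_nonneg (mul_nonneg (sq_nonneg εs) hc2) (sq_nonneg ρs))
          (sub_nonneg.2 hsa)
      nlinarith [h8, h9]
    have hEq : y ⬝ᵥ (((1 / 2 : ℝ) •
              (((εs / s) • !![0, 1; -1, 0]) * !![0, s; s, 2 * ms / ρs]
                + (((εs / s) • !![0, 1; -1, 0]) * !![0, s; s, 2 * ms / ρs])ᵀ)
              + (!![0, 0; 0, μ] : Matrix (Fin 2) (Fin 2) ℝ)).mulVec y)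
        = εs * y 0 ^ 2 + 2 * b * (y 0 * y 1) + (μ - εs) * y 1 ^ 2 := by
      simp only [dotProduct, Matrix.mulVec, Matrix.add_apply, Matrix.smul_apply,
        Matrix.transpose_apply, Matrix.mul_apply, Fin.sum_univ_two, Matrix.cons_val_zero,
        Matrix.cons_val_one, Matrix.head_cons, Matrix.cons_val', Matrix.empty_val',
        Matrix.cons_val_fin_one, Matrix.head_fin_const, smul_eq_mul, hbdef, Matrix.of_apply]
      field_simp
      ring
    clear_value b
    rw [hEq]
    clear hEq
    have h5 : -(εs ^ 2 / 2 * y 0 ^ 2 + 2 * b ^ 2 * y 1 ^ 2) ≤ εs * (2 * b * (y 0 * y 1)) := by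
      nlinarith [sq_nonneg (εs * y 0 + 2 * b * y 1)]
    nlinarith [h5, mul_le_mul_of_nonneg_right hb2 (sq_nonneg (y 1)), hθ1, hθ2, hεmu,
      hε.le, hc2, sq_nonneg (y 0), sq_nonneg (y 1),
      mul_le_mul_of_nonneg_right hθ1 (sq_nonneg (y 0)),
      mul_le_mul_of_nonneg_right hθ2 (sq_nonneg (y 1)),
      mul_le_mul_of_nonneg_right hεmu (sq_nonneg (y 1))]
  · have h1 := norm_clm_smul_rot_le (εs / s) (by positivity)
    have h2 : εs / s ≤ εs / Real.sqrt α0 :=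
      div_le_div_of_nonneg_left hε.le hsα0 hsα
    calc ‖Matrix.toEuclideanCLM (𝕜 := ℝ) (n := Fin 2) ((εs / s) • !![0, 1; -1, 0])‖
        ≤ εs / s := h1
      _ ≤ εs / Real.sqrt α0 := h2
      _ ≤ C := hC1
  · have h1 := norm_clm_smul_rot_le (εs / s) (by positivity)
    have hkξ : k * |ξ| ≤ Real.sqrt 2 * s := by
      have h7 : (k * |ξ|) ^ 2 ≤ (Real.sqrt 2 * s) ^ 2 := by
        rw [mul_pow, mul_pow, Real.sq_sqrt (by norm_num : (0:ℝ) ≤ 2), sq_abs]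
        nlinarith
      calc k * |ξ| = Real.sqrt ((k * |ξ|) ^ 2) := (Real.sqrt_sq (by positivity)).symm
        _ ≤ Real.sqrt ((Real.sqrt 2 * s) ^ 2) := Real.sqrt_le_sqrt h7
        _ = Real.sqrt 2 * s := Real.sqrt_sq (by positivity)
    have h2 : |ξ| * (εs / s) ≤ εs * Real.sqrt 2 / k := by
      rw [show |ξ| * (εs / s) = |ξ| * εs / s by ring, div_le_div_iff₀ hs hk]
      nlinarith [mul_le_mul_of_nonneg_left hkξ hε.le]
    calc |ξ| * ‖Matrix.toEuclideanCLM (𝕜 := ℝ) (n := Fin 2) ((εs / s) • !![0, 1; -1, 0])‖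
        ≤ |ξ| * (εs / s) := mul_le_mul_of_nonneg_left h1 (abs_nonneg ξ)
      _ ≤ εs * Real.sqrt 2 / k := h2
      _ ≤ C := hC2
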